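/- Let |x⟩, |y⟩ ∈ {|+⟩, |−⟩, |+i⟩, |−i⟩} be single-qubit states, let |s⟩ be any standard basis vector of ℂ² ⊗ ℂ², and set |φ⟩ = U_{|s⟩}(|x⟩ ⊗ |y⟩). Then for every linear operator A on ℂ², both ⟨φ| (I ⊗ A) |φ⟩ = Tr(A)/2 and ⟨φ| (A ⊗ I) |φ⟩ = Tr(A)/2; that is, the reduced state of |φ⟩ on each individual qubit is the maximally mixed state I/2. -/
import Mathlib


open scoped ComplexConjugate
open Finset

noncomputable section

/-- Standard (computational) basis vector `|s⟩` of the two-qubit space `ℂ² ⊗ ℂ²`. -/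
def e (s : Fin 2 × Fin 2) : Fin 2 × Fin 2 → ℂ := fun p => if p = s then 1 else 0

/-- The standard inner product `⟨u|v⟩` on two-qubit vectors
(conjugate-linear in the first argument). -/
def inner2 (u v : Fin 2 × Fin 2 → ℂ) : ℂ := ∑ p, conj (u p) * v p

/-- The Grover reflection operator `U_{|x⟩} = I - 2|x⟩⟨x|` applied to `v`. -/
def grover (x v : Fin 2 × Fin 2 → ℂ) : Fin 2 × Fin 2 → ℂ :=
  v - (2 * inner2 x v) • x

/-- Tensor product `u ⊗ v` of two single-qubit vectors. -/
def tensor (u v : Fin 2 → ℂ) : Fin 2 × Fin 2 → ℂ := fun p => u p.1 * v p.2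

/-- The operator `A ⊗ I` (acting on the first qubit) applied to a two-qubit vector. -/
def applyAI (A : Matrix (Fin 2) (Fin 2) ℂ) (w : Fin 2 × Fin 2 → ℂ) :
    Fin 2 × Fin 2 → ℂ := fun p => ∑ j, A p.1 j * w (j, p.2)

/-- The operator `I ⊗ A` (acting on the second qubit) applied to a two-qubit vector. -/
def applyIA (A : Matrix (Fin 2) (Fin 2) ℂ) (w : Fin 2 × Fin 2 → ℂ) :
    Fin 2 × Fin 2 → ℂ := fun p => ∑ j, A p.2 j * w (p.1, j)

/-- The single-qubit state `|+⟩ = (|0⟩ + |1⟩)/√2`. -/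
def qplus : Fin 2 → ℂ := ![(Real.sqrt 2 : ℂ)⁻¹, (Real.sqrt 2 : ℂ)⁻¹]

/-- The single-qubit state `|−⟩ = (|0⟩ − |1⟩)/√2`. -/
def qminus : Fin 2 → ℂ := ![(Real.sqrt 2 : ℂ)⁻¹, -(Real.sqrt 2 : ℂ)⁻¹]

/-- The single-qubit state `|+i⟩ = (|0⟩ + i|1⟩)/√2`. -/
def qplusI : Fin 2 → ℂ := ![(Real.sqrt 2 : ℂ)⁻¹, Complex.I * (Real.sqrt 2 : ℂ)⁻¹]

/-- The single-qubit state `|−i⟩ = (|0⟩ − i|1⟩)/√2`. -/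
def qminusI : Fin 2 → ℂ := ![(Real.sqrt 2 : ℂ)⁻¹, -Complex.I * (Real.sqrt 2 : ℂ)⁻¹]


lemma sqrt2_inv_mul : ((Real.sqrt 2 : ℂ))⁻¹ * ((Real.sqrt 2 : ℂ))⁻¹ = 1/2 := by
  have hr : Real.sqrt 2 * Real.sqrt 2 = 2 := Real.mul_self_sqrt (by norm_num)
  have h2 : ((Real.sqrt 2 : ℝ) : ℂ) * ((Real.sqrt 2 : ℝ) : ℂ) = 2 := by
    norm_cast
  rw [← mul_inv, h2]
  norm_num

lemma state_norm : ∀ z ∈ ({qplus, qminus, qplusI, qminusI} : Set (Fin 2 → ℂ)),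
    ∀ i, conj (z i) * z i = 1/2 := by
  have hc : conj ((Real.sqrt 2 : ℂ))⁻¹ = ((Real.sqrt 2 : ℂ))⁻¹ := by
    rw [map_inv₀, Complex.conj_ofReal]
  intro z hz i
  rcases hz with rfl | rfl | rfl | hz
  · fin_cases i <;>
      simpa [qplus, hc] using sqrt2_inv_mul
  · fin_cases i <;>
      simp only [qminus, Matrix.cons_val_zero, Matrix.cons_val_one, Matrix.head_cons,
        map_neg, hc, neg_mul_neg] <;>
      simpa using sqrt2_inv_mul
  · fin_cases i
    · simpa [qplusI, hc] using sqrt2_inv_mul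
    · simp [qplusI, hc, Complex.conj_I]
      linear_combination sqrt2_inv_mul - (((Real.sqrt 2 : ℂ))⁻¹ * ((Real.sqrt 2 : ℂ))⁻¹) * Complex.I_mul_I
  · rcases hz with rfl
    fin_cases i
    · simpa [qminusI, hc] using sqrt2_inv_mul
    · simp [qminusI, hc, Complex.conj_I]
      linear_combination sqrt2_inv_mul - (((Real.sqrt 2 : ℂ))⁻¹ * ((Real.sqrt 2 : ℂ))⁻¹) * Complex.I_mul_I

lemma main_aux (x y : Fin 2 → ℂ)
    (hx : ∀ i, conj (x i) * x i = 1/2) (hy : ∀ i, conj (y i) * y i = 1/2)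
    (s : Fin 2 × Fin 2) (A : Matrix (Fin 2) (Fin 2) ℂ) :
    inner2 (grover (e s) (tensor x y)) (applyIA A (grover (e s) (tensor x y))) = A.trace / 2 ∧
    inner2 (grover (e s) (tensor x y)) (applyAI A (grover (e s) (tensor x y))) = A.trace / 2 := by
  obtain ⟨s1, s2⟩ := s
  fin_cases s1 <;> fin_cases s2 <;> refine ⟨?_, ?_⟩
  · -- s=(0,0) IA
    simp only [inner2, grover, applyIA, applyAI, tensor, e, Matrix.trace, Matrix.diag,
      Fin.sum_univ_two, Fintype.sum_prod_type, Pi.sub_apply, Pi.smul_apply, smul_eq_mul,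
      map_sub, map_mul, map_ofNat, map_one, Prod.mk.injEq]
    norm_num
    linear_combination ((y 1) * ((starRingEnd ℂ) (y 1)) * (A 1 1) + (-1:ℂ) * (y 1) * ((starRingEnd ℂ) (y 0)) * (A 0 1) + (-1:ℂ) * (y 0) * ((starRingEnd ℂ) (y 1)) * (A 1 0) + (y 0) * ((starRingEnd ℂ) (y 0)) * (A 0 0)) * (hx 0) + ((y 1) * ((starRingEnd ℂ) (y 1)) * (A 1 1) + (y 1) * ((starRingEnd ℂ) (y 0)) * (A 0 1) + (y 0) * ((starRingEnd ℂ) (y 1)) * (A 1 0) + (y 0) * ((starRingEnd ℂ) (y 0)) * (A 0 0)) * (hx 1) + ((A 0 0)) * (hy 0) + ((A 1 1)) * (hy 1)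
  · -- s=(0,0) AI
    simp only [inner2, grover, applyIA, applyAI, tensor, e, Matrix.trace, Matrix.diag,
      Fin.sum_univ_two, Fintype.sum_prod_type, Pi.sub_apply, Pi.smul_apply, smul_eq_mul,
      map_sub, map_mul, map_ofNat, map_one, Prod.mk.injEq]
    norm_num
    linear_combination ((y 1) * ((starRingEnd ℂ) (y 1)) * (A 0 0) + (y 0) * ((starRingEnd ℂ) (y 0)) * (A 0 0)) * (hx 0) + ((y 1) * ((starRingEnd ℂ) (y 1)) * (A 1 1) + (y 0) * ((starRingEnd ℂ) (y 0)) * (A 1 1)) * (hx 1) + ((1/2:ℂ) * (A 1 1) + (1/2:ℂ) * (A 0 0) + (-1:ℂ) * (x 1) * ((starRingEnd ℂ) (x 0)) * (A 0 1) + (-1:ℂ) * (x 0) * ((starRingEnd ℂ) (x 1)) * (A 1 0)) * (hy 0) + ((1/2:ℂ) * (A 1 1) + (1/2:ℂ) * (A 0 0) + (x 1) * ((starRingEnd ℂ) (x 0)) * (A 0 1) + (x 0) * ((starRingEnd ℂ) (x 1)) * (A 1 0)) * (hy 1)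
  · -- s=(0,1) IA
    simp only [inner2, grover, applyIA, applyAI, tensor, e, Matrix.trace, Matrix.diag,
      Fin.sum_univ_two, Fintype.sum_prod_type, Pi.sub_apply, Pi.smul_apply, smul_eq_mul,
      map_sub, map_mul, map_ofNat, map_one, Prod.mk.injEq]
    norm_num
    linear_combination ((y 1) * ((starRingEnd ℂ) (y 1)) * (A 1 1) + (-1:ℂ) * (y 1) * ((starRingEnd ℂ) (y 0)) * (A 0 1) + (-1:ℂ) * (y 0) * ((starRingEnd ℂ) (y 1)) * (A 1 0) + (y 0) * ((starRingEnd ℂ) (y 0)) * (A 0 0)) * (hx 0) + ((y 1) * ((starRingEnd ℂ) (y 1)) * (A 1 1) + (y 1) * ((starRingEnd ℂ) (y 0)) * (A 0 1) + (y 0) * ((starRingEnd ℂ) (y 1)) * (A 1 0) + (y 0) * ((starRingEnd ℂ) (y 0)) * (A 0 0)) * (hx 1) + ((A 0 0)) * (hy 0) + ((A 1 1)) * (hy 1)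
  · -- s=(0,1) AI
    simp only [inner2, grover, applyIA, applyAI, tensor, e, Matrix.trace, Matrix.diag,
      Fin.sum_univ_two, Fintype.sum_prod_type, Pi.sub_apply, Pi.smul_apply, smul_eq_mul,
      map_sub, map_mul, map_ofNat, map_one, Prod.mk.injEq]
    norm_num
    linear_combination ((y 1) * ((starRingEnd ℂ) (y 1)) * (A 0 0) + (y 0) * ((starRingEnd ℂ) (y 0)) * (A 0 0)) * (hx 0) + ((y 1) * ((starRingEnd ℂ) (y 1)) * (A 1 1) + (y 0) * ((starRingEnd ℂ) (y 0)) * (A 1 1)) * (hx 1) + ((1/2:ℂ) * (A 1 1) + (1/2:ℂ) * (A 0 0) + (x 1) * ((starRingEnd ℂ) (x 0)) * (A 0 1) + (x 0) * ((starRingEnd ℂ) (x 1)) * (A 1 0)) * (hy 0) + ((1/2:ℂ) * (A 1 1) + (1/2:ℂ) * (A 0 0) + (-1:ℂ) * (x 1) * ((starRingEnd ℂ) (x 0)) * (A 0 1) + (-1:ℂ) * (x 0) * ((starRingEnd ℂ) (x 1)) * (A 1 0)) * (hy 1)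
  · -- s=(1,0) IA
    simp only [inner2, grover, applyIA, applyAI, tensor, e, Matrix.trace, Matrix.diag,
      Fin.sum_univ_two, Fintype.sum_prod_type, Pi.sub_apply, Pi.smul_apply, smul_eq_mul,
      map_sub, map_mul, map_ofNat, map_one, Prod.mk.injEq]
    norm_num
    linear_combination ((y 1) * ((starRingEnd ℂ) (y 1)) * (A 1 1) + (y 1) * ((starRingEnd ℂ) (y 0)) * (A 0 1) + (y 0) * ((starRingEnd ℂ) (y 1)) * (A 1 0) + (y 0) * ((starRingEnd ℂ) (y 0)) * (A 0 0)) * (hx 0) + ((y 1) * ((starRingEnd ℂ) (y 1)) * (A 1 1) + (-1:ℂ) * (y 1) * ((starRingEnd ℂ) (y 0)) * (A 0 1) + (-1:ℂ) * (y 0) * ((starRingEnd ℂ) (y 1)) * (A 1 0) + (y 0) * ((starRingEnd ℂ) (y 0)) * (A 0 0)) * (hx 1) + ((A 0 0)) * (hy 0) + ((A 1 1)) * (hy 1)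
  · -- s=(1,0) AI
    simp only [inner2, grover, applyIA, applyAI, tensor, e, Matrix.trace, Matrix.diag,
      Fin.sum_univ_two, Fintype.sum_prod_type, Pi.sub_apply, Pi.smul_apply, smul_eq_mul,
      map_sub, map_mul, map_ofNat, map_one, Prod.mk.injEq]
    norm_num
    linear_combination ((y 1) * ((starRingEnd ℂ) (y 1)) * (A 0 0) + (y 0) * ((starRingEnd ℂ) (y 0)) * (A 0 0)) * (hx 0) + ((y 1) * ((starRingEnd ℂ) (y 1)) * (A 1 1) + (y 0) * ((starRingEnd ℂ) (y 0)) * (A 1 1)) * (hx 1) + ((1/2:ℂ) * (A 1 1) + (1/2:ℂ) * (A 0 0) + (-1:ℂ) * (x 1) * ((starRingEnd ℂ) (x 0)) * (A 0 1) + (-1:ℂ) * (x 0) * ((starRingEnd ℂ) (x 1)) * (A 1 0)) * (hy 0) + ((1/2:ℂ) * (A 1 1) + (1/2:ℂ) * (A 0 0) + (x 1) * ((starRingEnd ℂ) (x 0)) * (A 0 1) + (x 0) * ((starRingEnd ℂ) (x 1)) * (A 1 0)) * (hy 1)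
  · -- s=(1,1) IA
    simp only [inner2, grover, applyIA, applyAI, tensor, e, Matrix.trace, Matrix.diag,
      Fin.sum_univ_two, Fintype.sum_prod_type, Pi.sub_apply, Pi.smul_apply, smul_eq_mul,
      map_sub, map_mul, map_ofNat, map_one, Prod.mk.injEq]
    norm_num
    linear_combination ((y 1) * ((starRingEnd ℂ) (y 1)) * (A 1 1) + (y 1) * ((starRingEnd ℂ) (y 0)) * (A 0 1) + (y 0) * ((starRingEnd ℂ) (y 1)) * (A 1 0) + (y 0) * ((starRingEnd ℂ) (y 0)) * (A 0 0)) * (hx 0) + ((y 1) * ((starRingEnd ℂ) (y 1)) * (A 1 1) + (-1:ℂ) * (y 1) * ((starRingEnd ℂ) (y 0)) * (A 0 1) + (-1:ℂ) * (y 0) * ((starRingEnd ℂ) (y 1)) * (A 1 0) + (y 0) * ((starRingEnd ℂ) (y 0)) * (A 0 0)) * (hx 1) + ((A 0 0)) * (hy 0) + ((A 1 1)) * (hy 1)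
  · -- s=(1,1) AI
    simp only [inner2, grover, applyIA, applyAI, tensor, e, Matrix.trace, Matrix.diag,
      Fin.sum_univ_two, Fintype.sum_prod_type, Pi.sub_apply, Pi.smul_apply, smul_eq_mul,
      map_sub, map_mul, map_ofNat, map_one, Prod.mk.injEq]
    norm_num
    linear_combination ((y 1) * ((starRingEnd ℂ) (y 1)) * (A 0 0) + (y 0) * ((starRingEnd ℂ) (y 0)) * (A 0 0)) * (hx 0) + ((y 1) * ((starRingEnd ℂ) (y 1)) * (A 1 1) + (y 0) * ((starRingEnd ℂ) (y 0)) * (A 1 1)) * (hx 1) + ((1/2:ℂ) * (A 1 1) + (1/2:ℂ) * (A 0 0) + (x 1) * ((starRingEnd ℂ) (x 0)) * (A 0 1) + (x 0) * ((starRingEnd ℂ) (x 1)) * (A 1 0)) * (hy 0) + ((1/2:ℂ) * (A 1 1) + (1/2:ℂ) * (A 0 0) + (-1:ℂ) * (x 1) * ((starRingEnd ℂ) (x 0)) * (A 0 1) + (-1:ℂ) * (x 0) * ((starRingEnd ℂ) (x 1)) * (A 1 0)) * (hy 1)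

/-- For every nonce `|x⟩⊗|y⟩` from Hsu's set and every secret `|s⟩`, the shared state
`|φ⟩ = U_{|s⟩}(|x⟩⊗|y⟩)` has maximally mixed reduced state `I/2` on each qubit:
`⟨φ|(I⊗A)|φ⟩ = Tr(A)/2` and `⟨φ|(A⊗I)|φ⟩ = Tr(A)/2` for every operator `A`. -/
theorem hsu_shares_have_maximally_mixed_marginals
    (x y : Fin 2 → ℂ) (hx : x ∈ ({qplus, qminus, qplusI, qminusI} : Set (Fin 2 → ℂ)))
    (hy : y ∈ ({qplus, qminus, qplusI, qminusI} : Set (Fin 2 → ℂ)))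
    (s : Fin 2 × Fin 2) (φ : Fin 2 × Fin 2 → ℂ) (hφ : φ = grover (e s) (tensor x y)) :
    ∀ A : Matrix (Fin 2) (Fin 2) ℂ,
      inner2 φ (applyIA A φ) = A.trace / 2 ∧ inner2 φ (applyAI A φ) = A.trace / 2 := by
  intro A
  rw [hφ]
  exact main_aux x y (state_norm x hx) (state_norm y hy) s A

end
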